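/- (Strict negative type ⟹ generalized resistance metric) Let D be a symmetric n×n matrix with zero diagonal such that fᵀDf < 0 for all nonzero f with 1ᵀf = 0. Define G := −(1/2)(I − 11ᵀ/n) D (I − 11ᵀ/n) and Q := G†. Then Q is symmetric PSD with ker(Q) = span(1), and D = 1·diagvec(Q†)ᵀ + diagvec(Q†)·1ᵀ − 2Q†, i.e., D is the resistance matrix of the signed Laplacian Q. -/

import Mathlib

open Matrix Classical

/-- The Moore–Penrose pseudoinverse of a real matrix, defined via its four
characterizing Penrose equations (which have a unique solution). -/
noncomputable def pinv {m k : Type*} [Fintype m] [Fintype k]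
    (A : Matrix m k ℝ) : Matrix k m ℝ :=
  if h : ∃ X : Matrix k m ℝ,
      A * X * A = A ∧ X * A * X = X ∧ (A * X)ᵀ = A * X ∧ (X * A)ᵀ = X * A
  then h.choose else 0

/-!
Let `P = 11ᵀ/n` be the projection onto the constants and `J = I - P`, so that
`G = -½ JDJ`. Strict negative type says that `xᵀGx = -½ (Jx)ᵀD(Jx)` is positive unless `Jx = 0`,
so `G` is positive semidefinite and `G + P` is positive definite. Since `GP = PG = 0`, the four
Penrose equations show `G† = (G + P)⁻¹ - P`; they are symmetric in the two matrices, so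
`Q† = G`, and `Qv = 0` iff `(G + P)⁻¹v = Pv` iff `v = Pv`. Finally, testing `G` against
`f = eᵢ - eⱼ`, which satisfies `Jf = f`, gives `Gᵢᵢ + Gⱼⱼ - 2Gᵢⱼ = -½ fᵀDf = Dᵢⱼ`.
-/

section Penrose

variable {m k : Type*} [Fintype m] [Fintype k]

def IsPenroseInverse {R : Type*} [CommSemiring R] (A : Matrix m k R) (X : Matrix k m R) : Prop :=
  A * X * A = A ∧ X * A * X = X ∧ (A * X)ᵀ = A * X ∧ (X * A)ᵀ = X * A

namespace IsPenroseInverse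

variable {R : Type*} [CommSemiring R] {A : Matrix m k R} {X Y : Matrix k m R}

theorem symm (hX : IsPenroseInverse A X) : IsPenroseInverse X A :=
  ⟨hX.2.1, hX.1, hX.2.2.2, hX.2.2.1⟩

theorem mul_left_eq (hX : IsPenroseInverse A X) (hY : IsPenroseInverse A Y) : A * X = A * Y :=
  calc A * X = (A * Y * A * X)ᵀ := by rw [hY.1, hX.2.2.1]
    _ = (A * X)ᵀ * (A * Y)ᵀ := by simp only [transpose_mul, Matrix.mul_assoc]
    _ = A * Y := by rw [hX.2.2.1, hY.2.2.1, ← Matrix.mul_assoc, hX.1]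

theorem mul_right_eq (hX : IsPenroseInverse A X) (hY : IsPenroseInverse A Y) : X * A = Y * A :=
  calc X * A = (X * (A * Y * A))ᵀ := by rw [hY.1, hX.2.2.2]
    _ = (Y * A)ᵀ * (X * A)ᵀ := by simp only [transpose_mul, Matrix.mul_assoc]
    _ = Y * A := by rw [hX.2.2.2, hY.2.2.2, Matrix.mul_assoc, ← Matrix.mul_assoc A, hX.1]

theorem unique (hX : IsPenroseInverse A X) (hY : IsPenroseInverse A Y) : X = Y :=
  calc X = X * A * X := hX.2.1.symm
    _ = Y * (A * Y) := by rw [hX.mul_right_eq hY, Matrix.mul_assoc, hX.mul_left_eq hY]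
    _ = Y := by rw [← Matrix.mul_assoc, hY.2.1]

end IsPenroseInverse

theorem pinv_eq {A : Matrix m k ℝ} {X : Matrix k m ℝ} (hX : IsPenroseInverse A X) :
    pinv A = X := by
  have h : ∃ X, IsPenroseInverse A X := ⟨X, hX⟩
  exact (dif_pos h).trans (h.choose_spec.unique hX)

theorem IsPenroseInverse.posSemidef {A X : Matrix m m ℝ} (hX : IsPenroseInverse A X)
    (hXT : Xᵀ = X) (hA : A.PosSemidef) : X.PosSemidef := by
  have h := hA.conjTranspose_mul_mul_same X
  rwa [conjTranspose_eq_transpose_of_trivial, hXT, hX.2.1] at h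

end Penrose

section Complement

variable {ι R : Type*} [Fintype ι] [DecidableEq ι] [CommRing R] {A P : Matrix ι ι R}

theorem nonsing_inv_add_mul_eq_right (hPP : P * P = P) (hAP : A * P = 0)
    (hunit : IsUnit (A + P).det) : (A + P)⁻¹ * P = P :=
  calc (A + P)⁻¹ * P = (A + P)⁻¹ * ((A + P) * P) := by rw [add_mul, hAP, hPP, zero_add]
    _ = P := nonsing_inv_mul_cancel_left _ _ hunit

theorem isPenroseInverse_nonsing_inv_add_sub (hA : Aᵀ = A) (hP : Pᵀ = P) (hPP : P * P = P)
    (hAP : A * P = 0) (hunit : IsUnit (A + P).det) : IsPenroseInverse A ((A + P)⁻¹ - P) := by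
  have hPA : P * A = 0 := by rw [← hA, ← hP, ← transpose_mul, hAP, transpose_zero]
  have hinvP := nonsing_inv_add_mul_eq_right hPP hAP hunit
  have hPinv : P * (A + P)⁻¹ = P := by
    rw [← transpose_transpose (P * _), transpose_mul, transpose_nonsing_inv, transpose_add, hA, hP,
      hinvP, hP]
  have hAX : A * ((A + P)⁻¹ - P) = 1 - P := by
    rw [mul_sub, hAP, sub_zero, ← add_sub_cancel_right A P, sub_mul, add_sub_cancel_right,
      mul_nonsing_inv _ hunit, hPinv]
  have hXA : ((A + P)⁻¹ - P) * A = 1 - P := by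
    rw [sub_mul, hPA, sub_zero, ← add_sub_cancel_right A P, mul_sub, add_sub_cancel_right,
      nonsing_inv_mul _ hunit, hinvP]
  have hsym : (1 - P)ᵀ = 1 - P := by rw [transpose_sub, transpose_one, hP]
  refine ⟨?_, ?_, by rw [hAX, hsym], by rw [hXA, hsym]⟩
  · rw [hAX, sub_mul, one_mul, hPA, sub_zero]
  · rw [hXA, sub_mul, one_mul, mul_sub, hPinv, hPP, sub_self, sub_zero]

theorem nonsing_inv_add_sub_mulVec_eq_zero_iff (hPP : P * P = P) (hAP : A * P = 0)
    (hunit : IsUnit (A + P).det) (v : ι → R) :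
    ((A + P)⁻¹ - P) *ᵥ v = 0 ↔ P *ᵥ v = v := by
  have hinvP := nonsing_inv_add_mul_eq_right hPP hAP hunit
  rw [sub_mulVec, sub_eq_zero]
  constructor
  · intro h
    calc P *ᵥ v = (A + P) *ᵥ (P *ᵥ v) := by rw [mulVec_mulVec, add_mul, hAP, hPP, zero_add]
      _ = v := by rw [← h, mulVec_mulVec, mul_nonsing_inv _ hunit, one_mulVec]
  · intro h
    rw [← h, mulVec_mulVec, hinvP, mulVec_mulVec, hPP]

end Complement

section Centering

variable {ι : Type*} [Fintype ι]

noncomputable def meanProj (ι : Type*) [Fintype ι] : Matrix ι ι ℝ :=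
  (1 / (Fintype.card ι : ℝ)) • of fun _ _ => 1

def IsStrictNegativeType (D : Matrix ι ι ℝ) : Prop :=
  ∀ f : ι → ℝ, ∑ i, f i = 0 → f ≠ 0 → f ⬝ᵥ D *ᵥ f < 0

/-- The squared distances `Gᵢᵢ + Gⱼⱼ - 2Gᵢⱼ` of the points with Gram matrix `G`. -/
def distOfGram (G : Matrix ι ι ℝ) : Matrix ι ι ℝ :=
  of (fun _ j => G j j) + of (fun i _ => G i i) - 2 • G

theorem cast_card_pos_of_elem (i : ι) : (0 : ℝ) < Fintype.card ι :=
  Nat.cast_pos.mpr (Fintype.card_pos_iff.mpr ⟨i⟩)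

theorem meanProj_transpose : (meanProj ι)ᵀ = meanProj ι := by
  ext
  simp [meanProj]

theorem meanProj_mulVec_apply (x : ι → ℝ) (i : ι) :
    (meanProj ι *ᵥ x) i = (∑ j, x j) / Fintype.card ι := by
  simp [meanProj, mulVec, dotProduct, Finset.mul_sum, div_eq_inv_mul]

theorem meanProj_mul_self : meanProj ι * meanProj ι = meanProj ι := by
  ext i j
  have := (cast_card_pos_of_elem i).ne'
  simp only [meanProj, one_div, smul_of, mul_apply, of_apply, Pi.smul_apply, smul_eq_mul,
    mul_one, Finset.sum_const, Finset.card_univ, nsmul_eq_mul, Matrix.smul_apply]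
  field_simp

theorem meanProj_mulVec_eq_self_iff (v : ι → ℝ) :
    meanProj ι *ᵥ v = v ↔ ∃ c : ℝ, v = fun _ => c := by
  constructor
  · exact fun h => ⟨_, funext fun i => (congrFun h i).symm.trans (meanProj_mulVec_apply v i)⟩
  · rintro ⟨c, rfl⟩
    funext i
    have := (cast_card_pos_of_elem i).ne'
    rw [meanProj_mulVec_apply]
    simp only [Finset.sum_const, Finset.card_univ, nsmul_eq_mul]
    field_simp

theorem dotProduct_meanProj_mulVec (x : ι → ℝ) :
    x ⬝ᵥ meanProj ι *ᵥ x = (∑ i, x i) ^ 2 / Fintype.card ι := by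
  simp only [dotProduct, meanProj_mulVec_apply, ← Finset.sum_mul]
  ring

theorem IsStrictNegativeType.dotProduct_mulVec_nonpos {D : Matrix ι ι ℝ}
    (hD : IsStrictNegativeType D) (f : ι → ℝ) (hf : ∑ i, f i = 0) : f ⬝ᵥ D *ᵥ f ≤ 0 := by
  rcases eq_or_ne f 0 with rfl | hf0
  · simp
  · exact (hD f hf hf0).le

variable [DecidableEq ι]

noncomputable def centering (ι : Type*) [Fintype ι] [DecidableEq ι] : Matrix ι ι ℝ :=
  1 - meanProj ι

noncomputable def centeredGram (D : Matrix ι ι ℝ) : Matrix ι ι ℝ :=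
  (-(1 / 2 : ℝ)) • (centering ι * D * centering ι)

theorem centering_transpose : (centering ι)ᵀ = centering ι := by
  rw [centering, transpose_sub, transpose_one, meanProj_transpose]

theorem centering_mul_meanProj : centering ι * meanProj ι = 0 := by
  rw [centering, sub_mul, one_mul, meanProj_mul_self, sub_self]

theorem sum_centering_mulVec (x : ι → ℝ) : ∑ i, (centering ι *ᵥ x) i = 0 := by
  simp only [centering, sub_mulVec, one_mulVec, Pi.sub_apply, meanProj_mulVec_apply,
    Finset.sum_sub_distrib, Finset.sum_const, Finset.card_univ, nsmul_eq_mul]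
  rcases isEmpty_or_nonempty ι with hι | ⟨⟨i⟩⟩
  · simp
  · field_simp [(cast_card_pos_of_elem i).ne']
    ring

theorem centering_mulVec_of_sum_eq_zero {x : ι → ℝ} (hx : ∑ i, x i = 0) :
    centering ι *ᵥ x = x := by
  funext i
  simp [centering, sub_mulVec, meanProj_mulVec_apply, hx]

theorem centeredGram_mul_meanProj (D : Matrix ι ι ℝ) : centeredGram D * meanProj ι = 0 := by
  rw [centeredGram, smul_mul_assoc, Matrix.mul_assoc, centering_mul_meanProj, mul_zero, smul_zero]

theorem dotProduct_centeredGram_mulVec (D : Matrix ι ι ℝ) (x : ι → ℝ) :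
    x ⬝ᵥ centeredGram D *ᵥ x = -(1 / 2) * (centering ι *ᵥ x ⬝ᵥ D *ᵥ (centering ι *ᵥ x)) := by
  rw [centeredGram, smul_mulVec, dotProduct_smul, smul_eq_mul, ← mulVec_mulVec, ← mulVec_mulVec,
    dotProduct_mulVec x, ← mulVec_transpose, centering_transpose]

variable {D : Matrix ι ι ℝ}

theorem centeredGram_transpose (hD : Dᵀ = D) : (centeredGram D)ᵀ = centeredGram D := by
  rw [centeredGram, transpose_smul, transpose_mul, transpose_mul, centering_transpose, hD,
    Matrix.mul_assoc]

theorem centeredGram_posSemidef (hD : Dᵀ = D)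
    (hneg : ∀ f : ι → ℝ, ∑ i, f i = 0 → f ⬝ᵥ D *ᵥ f ≤ 0) : (centeredGram D).PosSemidef := by
  refine .of_dotProduct_mulVec_nonneg (isHermitian_iff_isSymm.mpr (centeredGram_transpose hD))
    fun x => ?_
  rw [star_trivial, dotProduct_centeredGram_mulVec]
  linarith [hneg _ (sum_centering_mulVec x)]

theorem IsStrictNegativeType.posDef_centeredGram_add_meanProj (hstrict : IsStrictNegativeType D)
    (hD : Dᵀ = D) : (centeredGram D + meanProj ι).PosDef := by
  have hsymm : (centeredGram D + meanProj ι)ᵀ = centeredGram D + meanProj ι := by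
    rw [transpose_add, centeredGram_transpose hD, meanProj_transpose]
  refine .of_dotProduct_mulVec_pos (isHermitian_iff_isSymm.mpr hsymm) fun x hx => ?_
  rw [star_trivial, add_mulVec, dotProduct_add, dotProduct_meanProj_mulVec]
  rcases eq_or_ne (∑ i, x i) 0 with hs | hs
  · rw [dotProduct_centeredGram_mulVec, centering_mulVec_of_sum_eq_zero hs, hs,
      zero_pow two_ne_zero, zero_div, add_zero]
    linarith [hstrict x hs hx]
  · obtain ⟨i, -, -⟩ := Finset.exists_ne_zero_of_sum_ne_zero hs
    have hG :=
      (centeredGram_posSemidef hD hstrict.dotProduct_mulVec_nonpos).dotProduct_mulVec_nonneg x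
    have hcard := cast_card_pos_of_elem i
    rw [star_trivial] at hG
    have : 0 < (∑ i, x i) ^ 2 / Fintype.card ι := by positivity
    linarith

theorem dotProduct_mulVec_single_sub_single (A : Matrix ι ι ℝ) (i j : ι) :
    (Pi.single i 1 - Pi.single j 1 : ι → ℝ) ⬝ᵥ A *ᵥ (Pi.single i 1 - Pi.single j 1) =
      A i i + A j j - A i j - A j i := by
  simp [mulVec_sub, sub_dotProduct, dotProduct_sub, mulVec_single]
  ring

theorem distOfGram_centeredGram (hD : Dᵀ = D) (hdiag : ∀ i, D i i = 0) :
    distOfGram (centeredGram D) = D := by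
  ext i j
  set f : ι → ℝ := Pi.single i 1 - Pi.single j 1
  have hf : centering ι *ᵥ f = f := centering_mulVec_of_sum_eq_zero (by simp [f])
  have hG := dotProduct_centeredGram_mulVec D f
  rw [hf, dotProduct_mulVec_single_sub_single, dotProduct_mulVec_single_sub_single,
    hdiag, hdiag, ← transpose_apply D i j, hD, ← transpose_apply (centeredGram D) i j,
    centeredGram_transpose hD] at hG
  simp only [distOfGram, Matrix.sub_apply, Matrix.add_apply, of_apply, two_nsmul]
  linarith

end Centering

theorem strict_negative_type_is_generalized_resistance_matrix
    {n : ℕ} (D : Matrix (Fin n) (Fin n) ℝ)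
    (hsym : Dᵀ = D) (hdiag : ∀ i, D i i = 0)
    (hstrict : ∀ f : Fin n → ℝ, (∑ i, f i) = 0 → f ≠ 0 → f ⬝ᵥ D.mulVec f < 0)
    (G : Matrix (Fin n) (Fin n) ℝ)
    (hG : G = (-(1 / 2 : ℝ)) •
      ((1 - (1 / (n : ℝ)) • Matrix.of (fun _ _ : Fin n => (1 : ℝ))) * D *
        (1 - (1 / (n : ℝ)) • Matrix.of (fun _ _ : Fin n => (1 : ℝ)))))
    (Q : Matrix (Fin n) (Fin n) ℝ) (hQdef : Q = pinv G) :
    Qᵀ = Q ∧ Q.PosSemidef ∧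
    (∀ v : Fin n → ℝ, Q.mulVec v = 0 ↔ ∃ c : ℝ, v = fun _ => c) ∧
    D = Matrix.of (fun _ j => pinv Q j j) + Matrix.of (fun i _ => pinv Q i i) -
        2 • pinv Q := by
  obtain rfl : G = centeredGram D := by
    rw [hG, centeredGram, centering, meanProj, Fintype.card_fin]
  change IsStrictNegativeType D at hstrict
  have hGP := centeredGram_mul_meanProj D
  have hunit := (hstrict.posDef_centeredGram_add_meanProj hsym).det_pos.ne'.isUnit
  have hpen := isPenroseInverse_nonsing_inv_add_sub (centeredGram_transpose hsym)
    meanProj_transpose meanProj_mul_self hGP hunit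
  have hQ : Q = (centeredGram D + meanProj (Fin n))⁻¹ - meanProj (Fin n) :=
    hQdef.trans (pinv_eq hpen)
  have hQT : Qᵀ = Q := by
    rw [hQ, transpose_sub, transpose_nonsing_inv, transpose_add, centeredGram_transpose hsym,
      meanProj_transpose]
  rw [← hQ] at hpen
  refine ⟨hQT, hpen.posSemidef hQT ?_, fun v => ?_, ?_⟩
  · exact centeredGram_posSemidef hsym hstrict.dotProduct_mulVec_nonpos
  · rw [hQ, nonsing_inv_add_sub_mulVec_eq_zero_iff meanProj_mul_self hGP hunit,
      meanProj_mulVec_eq_self_iff]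
  · rw [pinv_eq hpen.symm]
    exact (distOfGram_centeredGram hsym hdiag).symm
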